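/- arXiv:1110.5743 — 2 statements merged into one kernel-verified Lean document; each statement's English description precedes it below -/
import Mathlib

section
/- Let A be a symmetric bilinear form on a real vector space V = Z ⊕ W (direct sum of subspaces) such that A is positive semidefinite on V and there exists γ < 1 with A(z,v)² ≤ γ² A(z,z) A(v,v) for all z ∈ Z, v ∈ W. Define B((z,v),(ζ,φ)) = A(z,ζ) + A(v,φ). Then for all z ∈ Z and v ∈ W: (1/(1+γ))·A(z+v, z+v) ≤ A(z,z) + A(v,v) ≤ (1/(1−γ))·A(z+v, z+v). -/
/-!
Expanding `A(z+v, z+v) = A(z,z) + 2 A(z,v) + A(v,v)` reduces both bounds to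
`|2 A(z,v)| ≤ γ (A(z,z) + A(v,v))`, which follows from the strengthened Cauchy–Schwarz
inequality and AM-GM: `4 γ² A(z,z) A(v,v) ≤ γ² (A(z,z) + A(v,v))²`.
-/

theorem LinearMap.apply_add_add_self_of_symm {R V : Type*} [CommRing R] [AddCommGroup V]
    [Module R V] (A : V →ₗ[R] V →ₗ[R] R) (hsymm : ∀ u w, A u w = A w u) (x y : V) :
    A (x + y) (x + y) = A x x + 2 * A x y + A y y := by
  simp only [map_add, LinearMap.add_apply, hsymm y x]
  ring

section OrderedField

variable {K : Type*} [Field K] [LinearOrder K] [IsStrictOrderedRing K]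

theorem abs_two_mul_le_of_sq_le_mul {a b c γ : K} (ha : 0 ≤ a) (hb : 0 ≤ b) (hγ : 0 ≤ γ)
    (hc : c ^ 2 ≤ γ ^ 2 * a * b) : |2 * c| ≤ γ * (a + b) := by
  refine abs_le_of_sq_le_sq ?_ (by positivity)
  calc (2 * c) ^ 2 = 4 * c ^ 2 := by ring
    _ ≤ γ ^ 2 * (4 * a * b) := by linarith
    _ ≤ γ ^ 2 * (a + b) ^ 2 := by gcongr; exact four_mul_le_sq_add a b
    _ = (γ * (a + b)) ^ 2 := by ring

theorem div_one_add_le_and_le_div_one_sub {s d γ : K} (hγ0 : 0 ≤ γ) (hγ1 : γ < 1)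
    (hd : |d| ≤ γ * s) :
    1 / (1 + γ) * (s + d) ≤ s ∧ s ≤ 1 / (1 - γ) * (s + d) := by
  obtain ⟨hlow, hupp⟩ := abs_le.mp hd
  rw [one_div_mul_eq_div, one_div_mul_eq_div, div_le_iff₀ (by linarith),
    le_div_iff₀ (by linarith)]
  constructor <;> linarith

end OrderedField

theorem stmt6_general {V : Type*} [AddCommGroup V] [Module ℝ V]
    (A : V →ₗ[ℝ] V →ₗ[ℝ] ℝ) (hsymm : ∀ u w, A u w = A w u)
    (hpsd : ∀ u, 0 ≤ A u u)
    (Z W : Submodule ℝ V)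
    (γ : ℝ) (hγ0 : 0 ≤ γ) (hγ1 : γ < 1)
    (hcs : ∀ z ∈ Z, ∀ v ∈ W, (A z v) ^ 2 ≤ γ ^ 2 * (A z z) * (A v v)) :
    ∀ z ∈ Z, ∀ v ∈ W,
      (1 / (1 + γ)) * A (z + v) (z + v) ≤ A z z + A v v ∧
      A z z + A v v ≤ (1 / (1 - γ)) * A (z + v) (z + v) := by
  intro z hz v hv
  have hcross : |2 * A z v| ≤ γ * (A z z + A v v) :=
    abs_two_mul_le_of_sq_le_mul (hpsd z) (hpsd v) hγ0 (hcs z hz v hv)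
  have hexpand : A (z + v) (z + v) = A z z + A v v + 2 * A z v := by
    rw [A.apply_add_add_self_of_symm hsymm]; ring
  rw [hexpand]
  exact div_one_add_le_and_le_div_one_sub hγ0 hγ1 hcross

/-- Two-sided bound on the block-diagonal preconditioner: if `A` is a symmetric
positive semidefinite bilinear form on `V = Z ⊕ W` and a strengthened
Cauchy–Schwarz inequality holds with constant `γ < 1`, then
`(1/(1+γ)) A(z+v,z+v) ≤ A(z,z) + A(v,v) ≤ (1/(1−γ)) A(z+v,z+v)`. -/
theorem stmt6 {V : Type*} [AddCommGroup V] [Module ℝ V]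
    (A : V →ₗ[ℝ] V →ₗ[ℝ] ℝ) (hsymm : ∀ u w, A u w = A w u)
    (hpsd : ∀ u, 0 ≤ A u u)
    (Z W : Submodule ℝ V) (hsum : Z ⊔ W = ⊤) (hdisj : Z ⊓ W = ⊥)
    (γ : ℝ) (hγ0 : 0 ≤ γ) (hγ1 : γ < 1)
    (hcs : ∀ z ∈ Z, ∀ v ∈ W, (A z v) ^ 2 ≤ γ ^ 2 * (A z z) * (A v v)) :
    ∀ z ∈ Z, ∀ v ∈ W,
      (1 / (1 + γ)) * A (z + v) (z + v) ≤ A z z + A v v ∧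
      A z z + A v v ≤ (1 / (1 - γ)) * A (z + v) (z + v) :=
  stmt6_general A hsymm hpsd Z W γ hγ0 hγ1 hcs
end

section
/- Let A be a symmetric positive definite bilinear form on V = Z ⊕ W with strengthened Cauchy–Schwarz constant γ < 1 between Z and W, and let B be the block-diagonal form B(z+v, ζ+φ) = A(z,ζ) + A(v,φ) for z,ζ ∈ Z and v,φ ∈ W. Then the generalized eigenvalues λ of A with respect to B (i.e., values λ for which A(u,·) = λB(u,·) for some nonzero u) all lie in the interval [1−γ, 1+γ]. -/
/-- All generalized eigenvalues of `A` with respect to the block-diagonal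
approximation `B` lie in `[1−γ, 1+γ]`; equivalently, the two-sided bound
`(1−γ) B(u,u) ≤ A(u,u) ≤ (1+γ) B(u,u)` holds for all `u`. -/
theorem stmt17 {V : Type*} [AddCommGroup V] [Module ℝ V] [FiniteDimensional ℝ V]
    (A B : V →ₗ[ℝ] V →ₗ[ℝ] ℝ)
    (hAsymm : ∀ u w, A u w = A w u)
    (hApos : ∀ u, u ≠ 0 → 0 < A u u)
    (Z W : Submodule ℝ V) (hsum : Z ⊔ W = ⊤) (hdisj : Z ⊓ W = ⊥)
    (γ : ℝ) (hγ0 : 0 ≤ γ) (hγ1 : γ < 1)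
    (hcs : ∀ z ∈ Z, ∀ v ∈ W, (A z v) ^ 2 ≤ γ ^ 2 * (A z z) * (A v v))
    (hB : ∀ z ∈ Z, ∀ ζ ∈ Z, ∀ v ∈ W, ∀ φ ∈ W,
      B (z + v) (ζ + φ) = A z ζ + A v φ) :
    (∀ z ∈ Z, ∀ v ∈ W,
      (1 - γ) * (A z z + A v v) ≤ A (z + v) (z + v) ∧
      A (z + v) (z + v) ≤ (1 + γ) * (A z z + A v v)) ∧
    (∀ lam : ℝ, ∀ u : V, u ≠ 0 → (∀ w : V, A u w = lam * B u w) →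
      1 - γ ≤ lam ∧ lam ≤ 1 + γ) := by
  have hnn : ∀ u : V, 0 ≤ A u u := by
    intro u
    rcases eq_or_ne u 0 with h | h
    · simp [h]
    · exact (hApos u h).le
  have key : ∀ z ∈ Z, ∀ v ∈ W, |A z v| ≤ γ * (A z z + A v v) / 2 := by
    intro z hz v hv
    have h1 := hcs z hz v hv
    have haz := hnn z
    have hav := hnn v
    have hc : 0 ≤ γ * (A z z + A v v) / 2 := by positivity
    have h3 : (A z v) ^ 2 ≤ (γ * (A z z + A v v) / 2) ^ 2 := by
      nlinarith [sq_nonneg (A z z - A v v), sq_nonneg γ]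
    calc |A z v| = Real.sqrt ((A z v) ^ 2) := by rw [Real.sqrt_sq_eq_abs]
      _ ≤ Real.sqrt ((γ * (A z z + A v v) / 2) ^ 2) := Real.sqrt_le_sqrt h3
      _ = γ * (A z z + A v v) / 2 := by rw [Real.sqrt_sq hc]
  have expand : ∀ z v : V, A (z + v) (z + v) = A z z + 2 * A z v + A v v := by
    intro z v
    have := hAsymm v z
    simp [map_add, LinearMap.add_apply]
    linarith
  have main : ∀ z ∈ Z, ∀ v ∈ W,
      (1 - γ) * (A z z + A v v) ≤ A (z + v) (z + v) ∧
      A (z + v) (z + v) ≤ (1 + γ) * (A z z + A v v) := by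
    intro z hz v hv
    have hk := abs_le.mp (key z hz v hv)
    rw [expand z v]
    constructor <;> nlinarith [hk.1, hk.2]
  refine ⟨main, ?_⟩
  intro lam u hu hlam
  obtain ⟨z, hz, v, hv, huzv⟩ := Submodule.mem_sup.mp
    (by rw [hsum]; exact Submodule.mem_top : u ∈ Z ⊔ W)
  have hBuu : B u u = A z z + A v v := by
    rw [← huzv]; exact hB z hz z hz v hv v hv
  have hBpos : 0 < A z z + A v v := by
    rcases eq_or_ne z 0 with hz0 | hz0
    · have hv0 : v ≠ 0 := by rintro rfl; exact hu (by simp [← huzv, hz0])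
      have := hApos v hv0
      have := hnn z
      linarith
    · have := hApos z hz0
      have := hnn v
      linarith
  have hA := hlam u
  rw [hBuu] at hA
  have hmain := main z hz v hv
  rw [huzv] at hmain
  rw [hA] at hmain
  constructor
  · have := hmain.1
    nlinarith
  · have := hmain.2
    nlinarith
end
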